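/- arXiv:2411.15141 — 7 statements merged into one kernel-verified Lean document; each statement's English description precedes it below -/
import Mathlib

section
/- For each n ∈ ℕ define dₙ : ℝ² × ℝ² → ℝ by dₙ((u,u'),(v,v')) := |u−v| + (1/n)|u'−v'|. Then each dₙ is a metric on ℝ², the sequence (dₙ) is a Cauchy sequence in D(ℝ²) with respect to the uniformity of pointwise convergence (the subspace uniformity inherited from the product uniformity on ℝ^(ℝ²×ℝ²)), but (dₙ) does not converge to any element of D(ℝ²); in particular D(ℝ²) is not a complete uniform space. -/
/-!
For every pair of points, `dₙ(p, q) → |p.1 − q.1|`, so `(dₙ)` converges in the full product space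
`ℝ^(ℝ²×ℝ²)` and is therefore Cauchy there, hence also in the subspace `D(ℝ²)`. Its only possible
limit is `(p, q) ↦ |p.1 − q.1|`, which vanishes on the distinct points `(0,0), (0,1)` but is not
identically zero, so it lies outside `D(ℝ²)`.
-/

open Filter Topology

def IsMetric {X : Type*} (ρ : X → X → ℝ) : Prop :=
  (∀ x y, 0 ≤ ρ x y) ∧ (∀ x y, ρ x y = 0 ↔ x = y) ∧
  (∀ x y, ρ x y = ρ y x) ∧ (∀ x y z, ρ x z ≤ ρ x y + ρ y z)

/-- Membership in `D(X)`: a metric, or the constant zero function `O`. -/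
def MetricOrZero {X : Type*} (ρ : X → X → ℝ) : Prop :=
  IsMetric ρ ∨ ρ = fun _ _ => 0

/-- `dseq n` is the paper's `d_{n+1}`. -/
noncomputable def dseq (n : ℕ) : (ℝ × ℝ) → (ℝ × ℝ) → ℝ :=
  fun p q => |p.1 - q.1| + (1 / ((n : ℝ) + 1)) * |p.2 - q.2|

section Subtype

variable {α ι : Type*} [UniformSpace α] {p : α → Prop}

theorem CauchySeq.subtype_mk [Preorder ι] {u : ι → α} (hu : CauchySeq u) (hp : ∀ i, p (u i)) :
    CauchySeq (fun i => (⟨u i, hp i⟩ : Subtype p)) := by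
  rwa [CauchySeq, ← isUniformEmbedding_subtype_val.isUniformInducing.cauchy_map_iff,
    Filter.map_map]

theorem not_tendsto_subtype_mk_of_tendsto [T2Space α] {l : Filter ι} [l.NeBot] {u : ι → α}
    {a : α} (hu : Tendsto u l (𝓝 a)) (ha : ¬ p a) (hp : ∀ i, p (u i)) :
    ¬ ∃ L : Subtype p, Tendsto (fun i => (⟨u i, hp i⟩ : Subtype p)) l (𝓝 L) := by
  rintro ⟨L, hL⟩
  have hLa : (L : α) = a := tendsto_nhds_unique ((continuous_subtype_val.tendsto L).comp hL) hu
  exact ha (hLa ▸ L.property)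

end Subtype

section Metric

variable {X Y : Type*}

theorem isMetric_dist [MetricSpace X] : IsMetric (dist : X → X → ℝ) :=
  ⟨fun _ _ => dist_nonneg, fun _ _ => dist_eq_zero, dist_comm, dist_triangle⟩

theorem IsMetric.const_mul {ρ : X → X → ℝ} (hρ : IsMetric ρ) {c : ℝ} (hc : 0 < c) :
    IsMetric (fun x y => c * ρ x y) := by
  obtain ⟨nonneg, eq_zero, symm, triangle⟩ := hρ
  refine ⟨fun x y => mul_nonneg hc.le (nonneg x y), fun x y => ?_,
    fun x y => congrArg (c * ·) (symm x y), fun x y z => ?_⟩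
  · rw [mul_eq_zero, eq_zero]
    simp [hc.ne']
  · rw [← mul_add]
    exact mul_le_mul_of_nonneg_left (triangle x y z) hc.le

theorem IsMetric.prod_add {ρ : X → X → ℝ} {σ : Y → Y → ℝ} (hρ : IsMetric ρ) (hσ : IsMetric σ) :
    IsMetric (fun p q : X × Y => ρ p.1 q.1 + σ p.2 q.2) := by
  obtain ⟨ρ_nonneg, ρ_eq_zero, ρ_symm, ρ_triangle⟩ := hρ
  obtain ⟨σ_nonneg, σ_eq_zero, σ_symm, σ_triangle⟩ := hσ
  refine ⟨fun p q => add_nonneg (ρ_nonneg _ _) (σ_nonneg _ _), fun p q => ?_,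
    fun p q => by simp only [ρ_symm p.1, σ_symm p.2], fun p q r => ?_⟩
  · rw [add_eq_zero_iff_of_nonneg (ρ_nonneg _ _) (σ_nonneg _ _), ρ_eq_zero, σ_eq_zero, Prod.ext_iff]
  · linarith [ρ_triangle p.1 q.1 r.1, σ_triangle p.2 q.2 r.2]

end Metric

theorem dseq_isMetric (n : ℕ) : IsMetric (dseq n) := by
  unfold dseq
  have h := (isMetric_dist (X := ℝ)).prod_add
    ((isMetric_dist (X := ℝ)).const_mul (c := 1 / ((n : ℝ) + 1)) (by positivity))
  simpa only [Real.dist_eq] using h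

theorem tendsto_dseq : Tendsto dseq atTop (𝓝 fun p q => |p.1 - q.1|) := by
  refine tendsto_pi_nhds.2 fun p => tendsto_pi_nhds.2 fun q => ?_
  have h := (tendsto_one_div_add_atTop_nhds_zero_nat (𝕜 := ℝ)).mul_const |p.2 - q.2|
  simpa [dseq] using h.const_add |p.1 - q.1|

theorem not_metricOrZero_abs_sub_fst : ¬ MetricOrZero fun p q : ℝ × ℝ => |p.1 - q.1| := by
  rintro (hM | hZ)
  · have h := (hM.2.1 (0, 0) (0, 1)).1 (by simp)
    simp at h
  · have h := congrFun₂ hZ (0, 0) (1, 0)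
    norm_num at h

/-- each `dₙ` is a metric on `ℝ²`, the sequence `(dₙ)` is Cauchy
in `D(ℝ²)` with the uniformity of pointwise convergence (subspace of the
product uniformity on `ℝ^(ℝ²×ℝ²)`), but it converges to no element of
`D(ℝ²)`; in particular `D(ℝ²)` is not complete. -/
theorem D_R2_not_complete :
    (∀ n, IsMetric (dseq n)) ∧
    ∃ h : ∀ n, MetricOrZero (dseq n),
      CauchySeq (fun n => (⟨dseq n, h n⟩ :
          {ρ : (ℝ × ℝ) → (ℝ × ℝ) → ℝ // MetricOrZero ρ})) ∧
      ¬ ∃ L : {ρ : (ℝ × ℝ) → (ℝ × ℝ) → ℝ // MetricOrZero ρ},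
        Filter.Tendsto (fun n => (⟨dseq n, h n⟩ :
            {ρ : (ℝ × ℝ) → (ℝ × ℝ) → ℝ // MetricOrZero ρ}))
          Filter.atTop (nhds L) :=
  ⟨dseq_isMetric, fun n => Or.inl (dseq_isMetric n),
    tendsto_dseq.cauchySeq.subtype_mk _,
    not_tendsto_subtype_mk_of_tendsto tendsto_dseq not_metricOrZero_abs_sub_fst _⟩
end

section
/- Let X be a non-empty set such that every metric d on X satisfies inf{d(x,y) : x,y ∈ X, x ≠ y} > 0 (i.e. there is no shrinking metric on X). Then for every nonzero metric ρ on X there exists a > 0 such that a·ρ_d(x,y) ≤ ρ(x,y) for all x,y ∈ X, where ρ_d is the discrete metric on X. (Hence the singleton {ρ_d} is a basis of D(X)∖{O}, which therefore has dimension 1.) -/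
open Classical in
/-- The discrete metric on a set `X`. -/
noncomputable def discMetric (X : Type*) : X → X → ℝ :=
  fun x y => if x = y then 0 else 1

/-- if every metric `d` on `X` satisfies
`inf{d(x,y) : x ≠ y} > 0` (no shrinking metric on `X`), then every nonzero
metric `ρ` on `X` dominates a positive multiple of the discrete metric `ρ_d`;
hence `{ρ_d}` is a basis of `D(X) ∖ {O}`. -/
theorem discrete_metric_basis_of_no_shrinking {X : Type*} [Nonempty X]
    (h : ∀ d : X → X → ℝ, IsMetric d → ∃ c > 0, ∀ x y, x ≠ y → c ≤ d x y)
    (ρ : X → X → ℝ) (hρ : IsMetric ρ) (hne : ρ ≠ fun _ _ => 0) :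
    ∃ a > 0, ∀ x y, a * discMetric X x y ≤ ρ x y := by
  obtain ⟨c, hc, hcle⟩ := h ρ hρ
  refine ⟨c, hc, fun x y => ?_⟩
  unfold discMetric
  by_cases hxy : x = y
  · simp [hxy, hρ.1]
  · simp [hxy]
    exact hcle x y hxy
end

section
/- Let X be a non-empty set and suppose there exists a metric d on X with inf{d(x,y) : x,y ∈ X, x ≠ y} = 0. Define d̂(x,y) := d(x,y)/(1+d(x,y)). Then d̂ is a nonzero metric on X with d̂(x,y) ≤ ρ_d(x,y) for all x,y ∈ X (where ρ_d is the discrete metric on X), and there is no β > 0 such that β·ρ_d(x,y) ≤ d̂(x,y) for all x,y ∈ X. (Hence the discrete metric does not belong to any basis of D(X)∖{O}.) -/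
/-- if `X` carries a shrinking metric `d`
(`inf{d(x,y) : x ≠ y} = 0`), then `d̂(x,y) = d(x,y)/(1+d(x,y))` is a nonzero
metric lying pointwise below the discrete metric `ρ_d`, while no positive
multiple of `ρ_d` lies pointwise below `d̂`; hence `ρ_d` belongs to no basis
of `D(X) ∖ {O}`. -/
theorem discrete_metric_not_in_basis {X : Type*} (d : X → X → ℝ)
    (hd : IsMetric d) (hshrink : ∀ ε > 0, ∃ x y, x ≠ y ∧ d x y < ε) :
    IsMetric (fun x y => d x y / (1 + d x y)) ∧
    (fun x y => d x y / (1 + d x y)) ≠ (fun _ _ => (0 : ℝ)) ∧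
    (∀ x y, d x y / (1 + d x y) ≤ discMetric X x y) ∧
    (¬ ∃ β > 0, ∀ x y, β * discMetric X x y ≤ d x y / (1 + d x y)) := by
  obtain ⟨hnn, hzero, hsymm, htri⟩ := hd
  have hpos : ∀ x y : X, (0:ℝ) < 1 + d x y := fun x y => by
    have := hnn x y; linarith
  refine ⟨⟨?_, ?_, ?_, ?_⟩, ?_, ?_, ?_⟩
  · intro x y
    exact div_nonneg (hnn x y) (hpos x y).le
  · intro x y
    rw [div_eq_zero_iff]
    constructor
    · rintro (h | h)
      · exact (hzero x y).mp h
      · exact absurd h (hpos x y).ne'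
    · intro h; exact Or.inl ((hzero x y).mpr h)
  · intro x y; simp [hsymm x y]
  · intro x y z
    have a := hnn x y; have b := hnn y z; have c := hnn x z
    have h1 : d x z ≤ d x y + d y z := htri x y z
    rw [div_add_div _ _ (hpos x y).ne' (hpos y z).ne', div_le_div_iff₀ (hpos x z) (mul_pos (hpos x y) (hpos y z))]
    nlinarith [mul_nonneg a b, mul_nonneg (mul_nonneg a b) c]
  · obtain ⟨x, y, hxy, _⟩ := hshrink 1 one_pos
    intro hfun
    have := congrFun (congrFun hfun x) y
    have hd0 : d x y ≠ 0 := fun h => hxy ((hzero x y).mp h)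
    rcases div_eq_zero_iff.mp this with h | h
    · exact hd0 h
    · exact (hpos x y).ne' h
  · intro x y
    unfold discMetric
    split
    · next h => simp [(hzero x y).mpr h]
    · rw [div_le_one (hpos x y)]; linarith [hnn x y]
  · rintro ⟨β, hβ, hall⟩
    obtain ⟨x, y, hxy, hlt⟩ := hshrink (β / 2) (by linarith)
    have h := hall x y
    rw [discMetric, if_neg hxy, mul_one] at h
    have h2 : d x y / (1 + d x y) ≤ d x y := by
      rw [div_le_iff₀ (hpos x y)]
      nlinarith [hnn x y]
    linarith
end

section
/- Let X be a non-empty set such that there exists a metric d on X with inf{d(x,y) : x,y ∈ X, x ≠ y} = 0, and let ρ be a bounded metric on X with c := inf{ρ(x,y) : x,y ∈ X, x ≠ y} > 0. Then there exists a nonzero metric η on X with η(x,y) ≤ ρ(x,y) for all x,y ∈ X such that there is no α > 0 with α·ρ(x,y) ≤ η(x,y) for all x,y ∈ X. (Concretely η := c·d̂ works, where d̂(x,y) = d(x,y)/(1+d(x,y)). Hence no bounded metric with positive infimum belongs to the feasible set Q(D(X)).) -/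
/-- suppose `X` carries a shrinking metric `d`
(`inf{d(x,y) : x ≠ y} = 0`), and let `ρ` be a bounded metric on `X` whose
infimum `c` over distinct pairs is positive. Then there is a nonzero metric
`η ≤ ρ` pointwise such that no positive multiple of `ρ` lies pointwise below
`η`; hence no bounded metric with positive infimum is in the feasible set
`Q(D(X))`. -/
theorem bounded_positive_inf_not_feasible {X : Type*} (d ρ : X → X → ℝ)
    (hd : IsMetric d) (hshrink : ∀ ε > 0, ∃ x y, x ≠ y ∧ d x y < ε)
    (hρ : IsMetric ρ) (hρ_bdd : ∃ M > 0, ∀ x y, ρ x y ≤ M)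
    (c : ℝ) (hglb : IsGLB {r : ℝ | ∃ x y, x ≠ y ∧ r = ρ x y} c) (hc : 0 < c) :
    ∃ η : X → X → ℝ, IsMetric η ∧ η ≠ (fun _ _ => 0) ∧
      (∀ x y, η x y ≤ ρ x y) ∧
      ¬ ∃ α > 0, ∀ x y, α * ρ x y ≤ η x y := by
  obtain ⟨hd0, hdeq, hdsymm, hdtri⟩ := hd
  obtain ⟨hρ0, hρeq, hρsymm, hρtri⟩ := hρ
  have hcle : ∀ x y : X, x ≠ y → c ≤ ρ x y := fun x y hxy =>
    hglb.1 ⟨x, y, hxy, rfl⟩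
  refine ⟨fun x y => c * (d x y / (1 + d x y)), ⟨?_, ?_, ?_, ?_⟩, ?_, ?_, ?_⟩
  · intro x y
    have h0 := hd0 x y
    positivity
  · intro x y
    have h0 := hd0 x y
    rw [← hdeq x y]
    constructor
    · intro h
      have h1 : (0:ℝ) < 1 + d x y := by linarith
      have := mul_eq_zero.mp h
      rcases this with h | h
      · exact absurd h (ne_of_gt hc)
      · have := div_eq_zero_iff.mp h
        rcases this with h | h
        · exact h
        · linarith
    · intro h; show c * (d x y / (1 + d x y)) = 0; rw [h]; simp
  · intro x y; show c * (d x y / (1 + d x y)) = c * (d y x / (1 + d y x)); rw [hdsymm x y]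
  · intro x y z
    have ha := hd0 x y
    have hb := hd0 y z
    have hab := hdtri x y z
    have hcz := hd0 x z
    rw [← mul_add]
    apply mul_le_mul_of_nonneg_left _ hc.le
    have h1 : d x z / (1 + d x z) ≤ (d x y + d y z) / (1 + (d x y + d y z)) := by
      rw [div_le_div_iff₀ (by linarith) (by linarith)]
      nlinarith
    refine h1.trans ?_
    rw [div_add_div _ _ (by positivity) (by positivity), div_le_div_iff₀ (by linarith) (by positivity)]
    nlinarith [mul_nonneg ha hb, mul_nonneg (mul_nonneg ha hb) (add_nonneg ha hb)]
  · obtain ⟨x, y, hxy, hlt⟩ := hshrink 1 one_pos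
    intro h
    have h0 : d x y ≠ 0 := fun h' => hxy ((hdeq x y).mp h')
    have h0' := hd0 x y
    have := congrFun (congrFun h x) y
    have h1 : (0:ℝ) < 1 + d x y := by linarith [lt_of_le_of_ne h0' (Ne.symm h0)]
    have : c * (d x y / (1 + d x y)) > 0 := by
      have : 0 < d x y := lt_of_le_of_ne h0' (Ne.symm h0)
      positivity
    linarith [congrFun (congrFun h x) y ▸ this]
  · intro x y
    show c * (d x y / (1 + d x y)) ≤ ρ x y
    by_cases hxy : x = y
    · subst hxy
      rw [(hdeq x x).mpr rfl, (hρeq x x).mpr rfl]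
      simp
    · have h0 := hd0 x y
      have hfrac : d x y / (1 + d x y) ≤ 1 := by
        rw [div_le_one (by linarith)]; linarith
      calc c * (d x y / (1 + d x y)) ≤ c * 1 :=
          mul_le_mul_of_nonneg_left hfrac hc.le
        _ = c := mul_one c
        _ ≤ ρ x y := hcle x y hxy
  · rintro ⟨α, hα, hαle⟩
    obtain ⟨x, y, hxy, hlt⟩ := hshrink α hα
    have h0 := hd0 x y
    have h1 : α * ρ x y ≤ c * (d x y / (1 + d x y)) := hαle x y
    have h2 : α * c ≤ α * ρ x y := mul_le_mul_of_nonneg_left (hcle x y hxy) hα.le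
    have h3 : c * (d x y / (1 + d x y)) ≤ c * d x y := by
      apply mul_le_mul_of_nonneg_left _ hc.le
      rw [div_le_iff₀ (by linarith)]
      nlinarith
    have h4 : c * d x y < c * α := by
      exact mul_lt_mul_of_pos_left hlt hc
    linarith
end

section
/- Let X be a non-empty set such that there exists a metric d on X with inf{d(x,y) : x,y ∈ X, x ≠ y} = 0. Then for every nonzero metric ρ on X there exist a metric σ on X and a constant s > 0 such that σ is bounded, inf{σ(x,y) : x,y ∈ X, x ≠ y} = 0, and s·σ(x,y) ≤ ρ(x,y) for all x,y ∈ X. (That is, the set D of bounded shrinking metrics is a generator of D(X)∖{O}.) -/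
/-- Truncating a metric at 1 gives a metric. -/
lemma isMetric_trunc {X : Type*} (ρ : X → X → ℝ) (hρ : IsMetric ρ) :
    IsMetric (fun x y => min (ρ x y) 1) := by
  obtain ⟨h0, heq, hsymm, htri⟩ := hρ
  refine ⟨fun x y => le_min (h0 x y) zero_le_one, fun x y => ?_, fun x y => by
    simp [hsymm x y], fun x y z => ?_⟩
  · show min (ρ x y) 1 = 0 ↔ x = y
    constructor
    · intro h
      replace h : min (ρ x y) 1 = 0 := h
      rcases le_total (ρ x y) 1 with hle | hle
      · exact (heq x y).1 (by rw [min_eq_left hle] at h; exact h)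
      · rw [min_eq_right hle] at h; norm_num at h
    · intro h; simp [(heq x y).2 h]
  · show min (ρ x z) 1 ≤ min (ρ x y) 1 + min (ρ y z) 1
    have hxz : min (ρ x z) 1 ≤ ρ x z := min_le_left _ _
    have hxz1 : min (ρ x z) 1 ≤ 1 := min_le_right _ _
    have h1 : 0 ≤ min (ρ x y) 1 := le_min (h0 x y) zero_le_one
    have h2 : 0 ≤ min (ρ y z) 1 := le_min (h0 y z) zero_le_one
    rcases le_total 1 (ρ x y) with h | h
    · rw [min_eq_right h]; linarith
    rcases le_total 1 (ρ y z) with h' | h'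
    · rw [min_eq_right h']; linarith
    rw [min_eq_left h, min_eq_left h']
    exact le_trans hxz (htri x y z)

/-- suppose `X` carries a shrinking metric `d`
(`inf{d(x,y) : x ≠ y} = 0`). Then for every nonzero metric `ρ` on `X` there
are a bounded shrinking metric `σ` and a constant `s > 0` with `s·σ ≤ ρ`
pointwise; i.e. the set `D` of bounded shrinking metrics generates
`D(X) ∖ {O}`. -/
theorem bounded_shrinking_metrics_generate {X : Type*} (d : X → X → ℝ)
    (hd : IsMetric d) (hshrink : ∀ ε > 0, ∃ x y, x ≠ y ∧ d x y < ε)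
    (ρ : X → X → ℝ) (hρ : IsMetric ρ) (hne : ρ ≠ fun _ _ => 0) :
    ∃ (σ : X → X → ℝ) (s : ℝ), IsMetric σ ∧ 0 < s ∧
      (∃ M > 0, ∀ x y, σ x y ≤ M) ∧
      (∀ ε > 0, ∃ x y, x ≠ y ∧ σ x y < ε) ∧
      (∀ x y, s * σ x y ≤ ρ x y) := by
  by_cases h : ∀ ε > 0, ∃ x y, x ≠ y ∧ ρ x y < ε
  · -- ρ is itself shrinking: take σ = min ρ 1, s = 1
    refine ⟨fun x y => min (ρ x y) 1, 1, isMetric_trunc ρ hρ, one_pos,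
      ⟨1, one_pos, fun x y => min_le_right _ _⟩, ?_, fun x y => ?_⟩
    · intro ε hε
      obtain ⟨x, y, hxy, hlt⟩ := h ε hε
      exact ⟨x, y, hxy, lt_of_le_of_lt (min_le_left _ _) hlt⟩
    · rw [one_mul]; exact min_le_left _ _
  · -- ρ is bounded below off-diagonal: take σ = min d 1, s = the lower bound
    push_neg at h
    obtain ⟨ε₀, hε₀, hlb⟩ := h
    refine ⟨fun x y => min (d x y) 1, ε₀, isMetric_trunc d hd, hε₀,
      ⟨1, one_pos, fun x y => min_le_right _ _⟩, ?_, fun x y => ?_⟩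
    · intro ε hε
      obtain ⟨x, y, hxy, hlt⟩ := hshrink ε hε
      exact ⟨x, y, hxy, lt_of_le_of_lt (min_le_left _ _) hlt⟩
    · by_cases hxy : x = y
      · subst hxy
        simp [(hd.2.1 x x).2 rfl, (hρ.2.1 x x).2 rfl]
      · have h1 : min (d x y) 1 ≤ 1 := min_le_right _ _
        have h2 : ε₀ * min (d x y) 1 ≤ ε₀ * 1 :=
          mul_le_mul_of_nonneg_left h1 hε₀.le
        have h3 := hlb x y hxy
        linarith
end

section
/- Define κ : [−1,1] × [−1,1] → ℝ by: κ(x,y) = |x−y| if |x| ≤ 1/2 and |y| ≤ 1/2; κ(x,y) = 2 if x ≠ y and (|x| > 1/2 or |y| > 1/2); and κ(x,y) = 0 otherwise. Then: (i) κ is a metric on [−1,1]; (ii) κ is bounded and inf{κ(x,y) : x,y ∈ [−1,1], x ≠ y} = 0; (iii) the usual metric ρ_u(x,y) = |x−y| on [−1,1] is a nonzero metric with ρ_u(x,y) ≤ κ(x,y) for all x,y ∈ [−1,1], yet there is no α > 0 with α·κ(x,y) ≤ ρ_u(x,y) for all x,y ∈ [−1,1]. (Hence κ is a bounded shrinking metric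 that does not belong to the feasible set Q(D([−1,1])).) -/
open Classical in
/-- The function `κ` on `[−1,1]`: `κ(x,y) = |x−y|` if `|x| ≤ 1/2` and
`|y| ≤ 1/2`; `κ(x,y) = 2` if `x ≠ y` and (`|x| > 1/2` or `|y| > 1/2`);
`κ(x,y) = 0` otherwise. -/
noncomputable def kappa (x y : Set.Icc (-1 : ℝ) 1) : ℝ :=
  if |x.1| ≤ 1 / 2 ∧ |y.1| ≤ 1 / 2 then |x.1 - y.1|
  else if x ≠ y then 2 else 0

open Classical

lemma kappa_def (x y : Set.Icc (-1:ℝ) 1) :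
    kappa x y = if |x.1| ≤ 1 / 2 ∧ |y.1| ≤ 1 / 2 then |x.1 - y.1|
      else if x ≠ y then 2 else 0 := rfl

lemma abs_le_one (x : Set.Icc (-1:ℝ) 1) : |x.1| ≤ 1 :=
  abs_le.mpr ⟨x.2.1, x.2.2⟩

lemma kappa_nonneg (x y : Set.Icc (-1:ℝ) 1) : 0 ≤ kappa x y := by
  rw [kappa_def]; split
  · exact abs_nonneg _
  · split <;> norm_num

lemma kappa_le_two (x y : Set.Icc (-1:ℝ) 1) : kappa x y ≤ 2 := by
  rw [kappa_def]; split
  · calc |x.1 - y.1| ≤ |x.1| + |y.1| := abs_sub _ _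
      _ ≤ 2 := by have := abs_le_one x; have := abs_le_one y; linarith
  · split <;> norm_num

lemma kappa_self (x : Set.Icc (-1:ℝ) 1) : kappa x x = 0 := by
  rw [kappa_def]; split <;> simp

lemma kappa_eq_two {x y : Set.Icc (-1:ℝ) 1} (h : ¬(|x.1| ≤ 1/2 ∧ |y.1| ≤ 1/2))
    (hne : x ≠ y) : kappa x y = 2 := by
  rw [kappa_def, if_neg h, if_pos hne]

lemma kappa_eq_zero {x y : Set.Icc (-1:ℝ) 1} (h : kappa x y = 0) : x = y := by
  rw [kappa_def] at h
  by_cases hb : |x.1| ≤ 1/2 ∧ |y.1| ≤ 1/2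
  · rw [if_pos hb] at h
    exact Subtype.ext (by linarith [abs_eq_zero.mp h, sub_eq_zero.mp (abs_eq_zero.mp h)])
  · rw [if_neg hb] at h
    by_contra hne
    rw [if_pos hne] at h; norm_num at h

lemma kappa_comm (x y : Set.Icc (-1:ℝ) 1) : kappa x y = kappa y x := by
  rw [kappa_def, kappa_def, abs_sub_comm]
  by_cases hb : |x.1| ≤ 1/2 ∧ |y.1| ≤ 1/2
  · rw [if_pos hb, if_pos ⟨hb.2, hb.1⟩]
  · have hb' : ¬(|y.1| ≤ 1/2 ∧ |x.1| ≤ 1/2) := fun h => hb ⟨h.2, h.1⟩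
    rw [if_neg hb, if_neg hb']
    by_cases hne : x = y
    · subst hne; simp
    · rw [if_pos hne, if_pos (Ne.symm hne)]

lemma kappa_triangle (x y z : Set.Icc (-1:ℝ) 1) :
    kappa x z ≤ kappa x y + kappa y z := by
  by_cases hxz : x = z
  · subst hxz; rw [kappa_self]
    exact add_nonneg (kappa_nonneg _ _) (kappa_nonneg _ _)
  by_cases hb : |x.1| ≤ 1/2 ∧ |z.1| ≤ 1/2
  · rw [kappa_def, if_pos hb]
    by_cases hy : |y.1| ≤ 1/2
    · rw [kappa_def, if_pos ⟨hb.1, hy⟩, kappa_def, if_pos ⟨hy, hb.2⟩]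
      exact abs_sub_le _ _ _
    · have hxy : x ≠ y := fun h => hy (h ▸ hb.1)
      have h2 : kappa x y = 2 := kappa_eq_two (fun h => hy h.2) hxy
      have := kappa_nonneg y z
      have : |x.1 - z.1| ≤ 2 := by
        calc |x.1 - z.1| ≤ |x.1| + |z.1| := abs_sub _ _
          _ ≤ 2 := by linarith [hb.1, hb.2]
      linarith
  · rw [kappa_eq_two hb hxz]
    by_cases hxy : x = y
    · subst hxy; rw [kappa_eq_two hb hxz, kappa_self]; linarith
    by_cases hb2 : |x.1| ≤ 1/2 ∧ |y.1| ≤ 1/2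
    · have hz : ¬ |z.1| ≤ 1/2 := fun h => hb ⟨hb2.1, h⟩
      have hyz : y ≠ z := fun h => hz (h ▸ hb2.2)
      have := kappa_nonneg x y
      rw [kappa_eq_two (fun h => hz h.2) hyz]; linarith
    · have := kappa_nonneg y z
      rw [kappa_eq_two hb2 hxy]; linarith

/-- `κ` is a bounded shrinking metric on `[−1,1]`; the usual
metric `ρ_u(x,y) = |x−y|` on `[−1,1]` is a nonzero metric with `ρ_u ≤ κ`
pointwise, yet no positive multiple of `κ` lies pointwise below `ρ_u`; hence
`κ ∈ D ∖ Q(D([−1,1]))`. -/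
theorem kappa_in_D_not_feasible :
    IsMetric kappa ∧
    (∃ M > 0, ∀ x y, kappa x y ≤ M) ∧
    (∀ ε > 0, ∃ x y, x ≠ y ∧ kappa x y < ε) ∧
    IsMetric (fun x y : Set.Icc (-1 : ℝ) 1 => |x.1 - y.1|) ∧
    (fun x y : Set.Icc (-1 : ℝ) 1 => |x.1 - y.1|) ≠ (fun _ _ => (0 : ℝ)) ∧
    (∀ x y : Set.Icc (-1 : ℝ) 1, |x.1 - y.1| ≤ kappa x y) ∧
    (¬ ∃ α > 0, ∀ x y : Set.Icc (-1 : ℝ) 1, α * kappa x y ≤ |x.1 - y.1|) := by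
  have h0 : (0:ℝ) ∈ Set.Icc (-1:ℝ) 1 := by norm_num
  have h1 : (1:ℝ) ∈ Set.Icc (-1:ℝ) 1 := by norm_num
  refine ⟨⟨kappa_nonneg, fun x y => ⟨kappa_eq_zero, fun h => h ▸ kappa_self x⟩,
      kappa_comm, kappa_triangle⟩, ⟨2, by norm_num, kappa_le_two⟩, ?_, ?_, ?_, ?_, ?_⟩
  · intro ε hε
    set δ := min ε 1 / 2 with hδ
    have hδpos : 0 < δ := by positivity
    have hδle : δ ≤ 1/2 := by
      have : min ε 1 ≤ 1 := min_le_right _ _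
      simp [hδ]; linarith
    have hδlt : δ < ε := by
      have : min ε 1 ≤ ε := min_le_left _ _
      linarith
    refine ⟨⟨0, h0⟩, ⟨δ, by constructor <;> [linarith; linarith]⟩, ?_, ?_⟩
    · intro h; apply absurd (Subtype.ext_iff.mp h); simp; linarith
    · rw [kappa_def, if_pos ⟨by norm_num, by rw [abs_of_pos hδpos]; linarith⟩]
      simp [abs_of_pos hδpos]; linarith
  · exact ⟨fun x y => abs_nonneg _,
      fun x y => ⟨fun h => Subtype.ext (by linarith [sub_eq_zero.mp (abs_eq_zero.mp h)]),
        fun h => by rw [h]; simp⟩,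
      fun x y => abs_sub_comm _ _, fun x y z => abs_sub_le _ _ _⟩
  · intro h
    have := congrFun (congrFun h ⟨0, h0⟩) ⟨1, h1⟩
    norm_num at this
  · intro x y
    rw [kappa_def]
    by_cases hb : |x.1| ≤ 1/2 ∧ |y.1| ≤ 1/2
    · rw [if_pos hb]
    · rw [if_neg hb]
      by_cases hne : x = y
      · subst hne; simp
      · rw [if_pos hne]
        calc |x.1 - y.1| ≤ |x.1| + |y.1| := abs_sub _ _
          _ ≤ 2 := by linarith [abs_le_one x, abs_le_one y]
  · rintro ⟨α, hα, hall⟩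
    set δ := min α 1 with hδ
    have hδpos : 0 < δ := lt_min hα one_pos
    have hδle1 : δ ≤ 1 := min_le_right _ _
    have hδleα : δ ≤ α := min_le_left _ _
    have hy : (1 - δ : ℝ) ∈ Set.Icc (-1:ℝ) 1 := by constructor <;> simp <;> linarith
    have hxy : (⟨1, h1⟩ : Set.Icc (-1:ℝ) 1) ≠ ⟨1 - δ, hy⟩ := by
      intro h; apply absurd (Subtype.ext_iff.mp h); simp; linarith
    have hk : kappa ⟨1, h1⟩ ⟨1 - δ, hy⟩ = 2 := by
      apply kappa_eq_two _ hxy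
      intro ⟨h, _⟩; rw [abs_one] at h; linarith
    have := hall ⟨1, h1⟩ ⟨1 - δ, hy⟩
    rw [hk] at this
    have habs : |(1:ℝ) - (1 - δ)| = δ := by rw [show (1:ℝ) - (1-δ) = δ by ring, abs_of_pos hδpos]
    rw [habs] at this; linarith
end

section
/- Let 𝒳 be a vector space over ℝ whose dimension ℵ (the cardinality of a Hamel basis) is infinite, and let 𝔠 denote the cardinality of ℝ. Then there exists a family (f_i)_{i ∈ I} of norms on 𝒳, indexed by a set I of cardinality 2^ℵ · 𝔠, which is pairwise orderly independent: for all distinct i, j ∈ I, inf{f_i(x)/f_j(x) : x ∈ 𝒳, x ≠ 0} = 0 and inf{f_j(x)/f_i(x) : x ∈ 𝒳, x ≠ 0} = 0. Equivalently, 𝒳 admits at least 2^ℵ · 𝔠 many pairwise totally non-equivalent norms. -/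
/-!
A Hamel basis indexed by an infinite `ι` can be reindexed by `ι × ℤ ≃ ι`. For `S ⊆ ι`, weight
the `ℓ¹` norm of the coordinates by `2 ^ n` at `(b, n)` when `b ∈ S` and by `1` otherwise.
If `b ∈ S \ T`, the two norms have ratio `2 ^ n` on the basis vector at `(b, n)`, which is
arbitrarily small and arbitrarily large as `n` ranges over `ℤ`. There are `2 ^ ℵ = 2 ^ ℵ · 𝔠`
subsets `S`.
-/

universe v

def IsNorm {𝒳 : Type*} [AddCommGroup 𝒳] [Module ℝ 𝒳] (f : 𝒳 → ℝ) : Prop :=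
  (∀ x, 0 ≤ f x) ∧ (∀ x, f x = 0 ↔ x = 0) ∧
  (∀ (α : ℝ) (x : 𝒳), f (α • x) = |α| * f x) ∧
  (∀ x y, f (x + y) ≤ f x + f y)

namespace Module.Basis

variable {ι 𝒳 : Type*} [AddCommGroup 𝒳] [Module ℝ 𝒳]

noncomputable def weightedNorm (B : Basis ι ℝ 𝒳) (w : ι → ℝ) (x : 𝒳) : ℝ :=
  (B.repr x).sum fun i a => w i * |a|

variable (B : Basis ι ℝ 𝒳) {v w : ι → ℝ}

@[simp]
lemma weightedNorm_basis (w : ι → ℝ) (i : ι) : B.weightedNorm w (B i) = w i := by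
  simp [weightedNorm]

lemma weightedNorm_injective : Function.Injective B.weightedNorm := fun v w h =>
  funext fun i => by simpa using congrFun h (B i)

lemma weightedNorm_smul (w : ι → ℝ) (α : ℝ) (x : 𝒳) :
    B.weightedNorm w (α • x) = |α| * B.weightedNorm w x := by
  rw [weightedNorm, map_smul, Finsupp.sum_smul_index' (by simp), weightedNorm, Finsupp.mul_sum]
  simp only [smul_eq_mul, abs_mul, mul_left_comm]

lemma weightedNorm_add_le (hw : ∀ i, 0 ≤ w i) (x y : 𝒳) :
    B.weightedNorm w (x + y) ≤ B.weightedNorm w x + B.weightedNorm w y := by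
  classical
  set s := (B.repr x).support ∪ (B.repr y).support
  have hxy : (B.repr (x + y)).support ⊆ s := by
    rw [map_add]; exact Finsupp.support_add
  rw [weightedNorm, weightedNorm, weightedNorm, Finsupp.sum_of_support_subset _ hxy _ (by simp),
    Finsupp.sum_of_support_subset _ Finset.subset_union_left _ (by simp),
    Finsupp.sum_of_support_subset _ Finset.subset_union_right _ (by simp),
    ← Finset.sum_add_distrib]
  gcongr with i
  rw [map_add, Finsupp.add_apply, ← mul_add]
  exact mul_le_mul_of_nonneg_left (abs_add_le _ _) (hw i)

lemma weightedNorm_nonneg (hw : ∀ i, 0 ≤ w i) (x : 𝒳) : 0 ≤ B.weightedNorm w x :=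
  Finsupp.sum_nonneg fun i _ => mul_nonneg (hw i) (abs_nonneg _)

lemma weightedNorm_eq_zero_iff (hw : ∀ i, 0 < w i) {x : 𝒳} : B.weightedNorm w x = 0 ↔ x = 0 := by
  rw [weightedNorm, Finsupp.sum,
    Finset.sum_eq_zero_iff_of_nonneg fun i _ => mul_nonneg (hw i).le (abs_nonneg _)]
  simp only [Finsupp.mem_support_iff, mul_eq_zero, (hw _).ne', abs_eq_zero, false_or]
  rw [← B.repr.map_eq_zero_iff, Finsupp.ext_iff]
  simp

lemma isNorm_weightedNorm (hw : ∀ i, 0 < w i) : IsNorm (B.weightedNorm w) :=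
  ⟨B.weightedNorm_nonneg fun i => (hw i).le, fun _ => B.weightedNorm_eq_zero_iff hw,
    B.weightedNorm_smul w, B.weightedNorm_add_le fun i => (hw i).le⟩

lemma exists_weightedNorm_div_lt (h : ∀ ε > 0, ∃ i, v i / w i < ε) :
    ∀ ε > 0, ∃ x : 𝒳, x ≠ 0 ∧ B.weightedNorm v x / B.weightedNorm w x < ε := fun ε hε =>
  let ⟨i, hi⟩ := h ε hε
  ⟨B i, B.ne_zero i, by simpa using hi⟩

end Module.Basis

section TiltWeight

variable {ι : Type*}

open scoped Classical in
noncomputable def tiltWeight (S : Set ι) (p : ι × ℤ) : ℝ :=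
  if p.1 ∈ S then 2 ^ p.2 else 1

lemma tiltWeight_pos (S : Set ι) (p : ι × ℤ) : 0 < tiltWeight S p := by
  unfold tiltWeight; split_ifs <;> positivity

lemma tiltWeight_injective : Function.Injective (tiltWeight (ι := ι)) := by
  intro S T h
  ext b
  have := congrFun h (b, 1)
  simp only [tiltWeight] at this
  split_ifs at this <;> simp_all

lemma exists_tiltWeight_div_lt {S T : Set ι} (hST : S ≠ T) :
    ∀ ε > 0, ∃ p, tiltWeight S p / tiltWeight T p < ε := by
  intro ε hε
  obtain ⟨n, hn⟩ := exists_pow_lt_of_lt_one hε (by norm_num : (2 : ℝ)⁻¹ < 1)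
  obtain ⟨b, hb⟩ := Set.symmDiff_nonempty.mpr hST
  rcases hb with ⟨hbS, hbT⟩ | ⟨hbT, hbS⟩
  · refine ⟨(b, -n), ?_⟩
    simpa [tiltWeight, hbS, hbT] using hn
  · refine ⟨(b, n), ?_⟩
    simpa [tiltWeight, hbS, hbT] using hn

end TiltWeight

namespace Cardinal

open scoped Cardinal

lemma two_power_mul_continuum {κ : Cardinal} (hκ : ℵ₀ ≤ κ) : 2 ^ κ * 𝔠 = 2 ^ κ := by
  have h𝔠 : 𝔠 ≤ 2 ^ κ := two_power_aleph0 ▸ power_le_power_left two_ne_zero hκ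
  exact mul_eq_left (aleph0_le_continuum.trans h𝔠) h𝔠 continuum_ne_zero

end Cardinal

lemma nonempty_prod_int_equiv {ι : Type*} [Infinite ι] : Nonempty (ι × ℤ ≃ ι) := by
  rw [← Cardinal.eq, Cardinal.mk_prod, Cardinal.mk_int, Cardinal.lift_aleph0, Cardinal.lift_uzero]
  exact Cardinal.mul_eq_left (Cardinal.aleph0_le_mk ι) (Cardinal.aleph0_le_mk ι) Cardinal.aleph0_ne_zero

/-- if `𝒳` is a real vector space of infinite dimension `ℵ`,
then there is a family of `2^ℵ · 𝔠` norms on `𝒳` (here realized as a set `S`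
of norms of that cardinality) which is pairwise orderly independent, i.e. for
distinct `f, g ∈ S` one has `inf{f(x)/g(x) : x ≠ 0} = 0` and
`inf{g(x)/f(x) : x ≠ 0} = 0` — equivalently, `𝒳` admits at least `2^ℵ · 𝔠`
pairwise totally non-equivalent norms. -/
theorem many_orderly_independent_norms {𝒳 : Type v} [AddCommGroup 𝒳]
    [Module ℝ 𝒳] (hdim : Cardinal.aleph0 ≤ Module.rank ℝ 𝒳) :
    ∃ S : Set (𝒳 → ℝ),
      Cardinal.mk S = 2 ^ Module.rank ℝ 𝒳 * Cardinal.continuum ∧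
      (∀ f ∈ S, IsNorm f) ∧
      (∀ f ∈ S, ∀ g ∈ S, f ≠ g →
        (∀ ε > 0, ∃ x : 𝒳, x ≠ 0 ∧ f x / g x < ε) ∧
        (∀ ε > 0, ∃ x : 𝒳, x ≠ 0 ∧ g x / f x < ε)) := by
  let ι := Module.Free.ChooseBasisIndex ℝ 𝒳
  have hι : Cardinal.mk ι = Module.rank ℝ 𝒳 := (Module.Free.chooseBasis ℝ 𝒳).mk_eq_rank''
  have : Infinite ι := Cardinal.infinite_iff.mpr (hι ▸ hdim)
  obtain ⟨e⟩ := nonempty_prod_int_equiv (ι := ι)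
  let B := (Module.Free.chooseBasis ℝ 𝒳).reindex e.symm
  have hinj : Function.Injective fun S : Set ι => B.weightedNorm (tiltWeight S) :=
    B.weightedNorm_injective.comp tiltWeight_injective
  refine ⟨Set.range fun S : Set ι => B.weightedNorm (tiltWeight S), ?_, ?_, ?_⟩
  · rw [Cardinal.mk_range_eq _ hinj, Cardinal.mk_set, hι, Cardinal.two_power_mul_continuum hdim]
  · rintro - ⟨S, rfl⟩
    exact B.isNorm_weightedNorm (tiltWeight_pos S)
  · rintro - ⟨S, rfl⟩ - ⟨T, rfl⟩ hST
    replace hST : S ≠ T := fun h => hST (h ▸ rfl)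
    exact ⟨B.exists_weightedNorm_div_lt (exists_tiltWeight_div_lt hST),
      B.exists_weightedNorm_div_lt (exists_tiltWeight_div_lt hST.symm)⟩
end
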